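/- arXiv:2409.04100 — 6 statements merged into one kernel-verified Lean document; each statement's English description precedes it below -/
import Mathlib

section
/- Let F be the mixture CDF F = (1 - π₁)F₀ + π₁F₁, where F₀ and F₁ are CDFs on ℝ and π₁ ∈ [0,1], and define π₁̲ = inf{ γ ∈ (0,1] : (F - (1-γ)F₀)/γ is a CDF }. Then π₁̲ = π₁ - sup{ 0 ≤ ε ≤ 1 : π₁F₁ - εF₀ is a sub-CDF (i.e. a nondecreasing, right-continuous, nonnegative function with limit 0 at -∞ and limit at most 1 at +∞) }. -/
/-!
Write `G_ε = π₁ F₁ - ε F₀`. Then `(F - (1 - γ) F₀) / γ = G_{π₁ - γ} / γ`, and for both the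
CDF condition on the left and the sub-CDF condition on the right, everything except monotonicity
of `G_ε` is automatic: right-continuity and the limit `0` at `-∞` are inherited from `F₀, F₁`,
nonnegativity follows from monotonicity, and the limits at `+∞` come out right. The set of `ε`
for which `G_ε` is monotone is closed and, as `F₀` is nondecreasing, downward closed; hence it is
a half-line `(-∞, s]` with `0 ≤ s ≤ π₁`, and both sides of the identity equal `π₁ - s`.
-/

open Filter MeasureTheory Set

/-- A CDF: nondecreasing, right-continuous, with limit 0 at -∞ and 1 at +∞. -/
def IsCDF (G : ℝ → ℝ) : Prop :=
  Monotone G ∧ (∀ x, ContinuousWithinAt G (Set.Ici x) x) ∧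
    Tendsto G atBot (nhds 0) ∧ Tendsto G atTop (nhds 1)

/-- A sub-CDF: nondecreasing, right-continuous, nonnegative, with limit 0 at -∞ and
limit at most 1 at +∞. -/
def IsSubCDF (G : ℝ → ℝ) : Prop :=
  Monotone G ∧ (∀ x, ContinuousWithinAt G (Set.Ici x) x) ∧ (∀ x, 0 ≤ G x) ∧
    Tendsto G atBot (nhds 0) ∧ ∃ l, l ≤ 1 ∧ Tendsto G atTop (nhds l)

open Topology

theorem isClosed_setOf_monotone_sub_mul {α : Type*} [Preorder α] (f g : α → ℝ) :
    IsClosed {ε : ℝ | Monotone fun x => f x - ε * g x} := by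
  simp only [Monotone, ofPred_forall]
  exact isClosed_iInter fun x => isClosed_iInter fun y => isClosed_iInter fun _ =>
    isClosed_le (by fun_prop) (by fun_prop)

theorem isLowerSet_setOf_monotone_sub_mul {α : Type*} [Preorder α] (f : α → ℝ) {g : α → ℝ}
    (hg : Monotone g) : IsLowerSet {ε : ℝ | Monotone fun x => f x - ε * g x} := by
  intro ε ε' hε'ε hε
  have hsum := hε.add (hg.const_mul (sub_nonneg.2 hε'ε))
  change Monotone _
  convert hsum using 2
  ring

theorem IsLowerSet.eq_Iic_csSup {α : Type*} [ConditionallyCompleteLinearOrder α]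
    [TopologicalSpace α] [OrderTopology α] {M : Set α} (hl : IsLowerSet M) (hc : IsClosed M)
    (hne : M.Nonempty) (hbdd : BddAbove M) : M = Iic (sSup M) :=
  Subset.antisymm (fun _ hx => le_csSup hbdd hx) fun _ hx => hl hx (hc.csSup_mem hne hbdd)

theorem csInf_Ioc_inter_Ici {α : Type*} [ConditionallyCompleteLinearOrder α] [DenselyOrdered α]
    {a b c : α} (hab : a < b) (hac : a ≤ c) (hcb : c ≤ b) : sInf (Ioc a b ∩ Ici c) = c := by
  rcases hac.eq_or_lt with rfl | hac
  · rw [inter_eq_left.2 (Ioc_subset_Ioi_self.trans Ioi_subset_Ici_self), csInf_Ioc hab]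
  · have hIcc : Ioc a b ∩ Ici c = Icc c b := by
      ext x
      simp only [mem_inter_iff, mem_Ioc, mem_Ici, mem_Icc]
      constructor
      · rintro ⟨⟨-, hxb⟩, hcx⟩
        exact ⟨hcx, hxb⟩
      · rintro ⟨hcx, hxb⟩
        exact ⟨⟨hac.trans_le hcx, hxb⟩, hcx⟩
    rw [hIcc, csInf_Icc hcb]

section SubMul

variable {H F₀ : ℝ → ℝ} {c ε : ℝ}

theorem tendsto_sub_mul_atBot (hF₀ : IsCDF F₀) (hH : Tendsto H atBot (𝓝 0)) :
    Tendsto (fun x => H x - ε * F₀ x) atBot (𝓝 0) := by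
  simpa using hH.sub (hF₀.2.2.1.const_mul ε)

theorem tendsto_sub_mul_atTop (hF₀ : IsCDF F₀) (hH : Tendsto H atTop (𝓝 c)) :
    Tendsto (fun x => H x - ε * F₀ x) atTop (𝓝 (c - ε)) := by
  simpa using hH.sub (hF₀.2.2.2.const_mul ε)

theorem continuousWithinAt_Ici_sub_mul (hF₀ : IsCDF F₀)
    (hH : ∀ x, ContinuousWithinAt H (Ici x) x) (x : ℝ) :
    ContinuousWithinAt (fun x => H x - ε * F₀ x) (Ici x) x :=
  (hH x).sub ((hF₀.2.1 x).const_mul ε)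

theorem le_of_monotone_sub_mul (hF₀ : IsCDF F₀) (hHbot : Tendsto H atBot (𝓝 0))
    (hHtop : Tendsto H atTop (𝓝 c)) (hm : Monotone fun x => H x - ε * F₀ x) : ε ≤ c := by
  have h₀ := hm.le_of_tendsto (tendsto_sub_mul_atBot hF₀ hHbot) 0
  have h₁ := hm.ge_of_tendsto (tendsto_sub_mul_atTop hF₀ hHtop) 0
  linarith

theorem isSubCDF_sub_mul_iff (hF₀ : IsCDF F₀) (hHrc : ∀ x, ContinuousWithinAt H (Ici x) x)
    (hHbot : Tendsto H atBot (𝓝 0)) (hHtop : Tendsto H atTop (𝓝 c)) (hc : c ≤ 1)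
    (hε : 0 ≤ ε) : IsSubCDF (fun x => H x - ε * F₀ x) ↔ Monotone fun x => H x - ε * F₀ x := by
  refine ⟨fun h => h.1, fun hm => ⟨hm, continuousWithinAt_Ici_sub_mul hF₀ hHrc,
    hm.le_of_tendsto (tendsto_sub_mul_atBot hF₀ hHbot), tendsto_sub_mul_atBot hF₀ hHbot,
    c - ε, by linarith, tendsto_sub_mul_atTop hF₀ hHtop⟩⟩

theorem isCDF_sub_mul_div_iff (hF₀ : IsCDF F₀) (hHrc : ∀ x, ContinuousWithinAt H (Ici x) x)
    (hHbot : Tendsto H atBot (𝓝 0)) (hHtop : Tendsto H atTop (𝓝 c)) {γ : ℝ} (hγ : 0 < γ) :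
    IsCDF (fun x => (H x - (c - γ) * F₀ x) / γ) ↔
      Monotone fun x => H x - (c - γ) * F₀ x := by
  refine ⟨fun h x y hxy => (div_le_div_iff_of_pos_right hγ).1 (h.1 hxy), fun hm => ?_⟩
  refine ⟨hm.div_const hγ.le, fun x => (continuousWithinAt_Ici_sub_mul hF₀ hHrc x).div_const γ,
    by simpa using (tendsto_sub_mul_atBot hF₀ hHbot).div_const γ, ?_⟩
  convert (tendsto_sub_mul_atTop hF₀ hHtop).div_const γ using 2
  rw [sub_sub_cancel, div_self hγ.ne']

theorem exists_setOf_monotone_sub_mul_eq_Iic (hF₀ : IsCDF F₀) (hHmono : Monotone H)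
    (hHbot : Tendsto H atBot (𝓝 0)) (hHtop : Tendsto H atTop (𝓝 c)) :
    ∃ s ∈ Icc 0 c, {ε : ℝ | Monotone fun x => H x - ε * F₀ x} = Iic s := by
  set M := {ε : ℝ | Monotone fun x => H x - ε * F₀ x}
  have h0M : (0 : ℝ) ∈ M := by simpa [M] using hHmono
  have hMc : M ⊆ Iic c := fun ε hε => le_of_monotone_sub_mul hF₀ hHbot hHtop hε
  refine ⟨sSup M, ⟨le_csSup ⟨c, hMc⟩ h0M, csSup_le ⟨0, h0M⟩ hMc⟩, ?_⟩
  exact (isLowerSet_setOf_monotone_sub_mul _ hF₀.1).eq_Iic_csSup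
    (isClosed_setOf_monotone_sub_mul _ _) ⟨0, h0M⟩ ⟨c, hMc⟩

end SubMul

/-- Patra–Sen identity: the identifiable lower bound `π₁̲` equals
`π₁ - sup{ 0 ≤ ε ≤ 1 : π₁ F₁ - ε F₀ is a sub-CDF }`. -/
theorem pi1_lower_eq_sub_subCDF
    (F₀ F₁ : ℝ → ℝ) (hF₀ : IsCDF F₀) (hF₁ : IsCDF F₁)
    (π₁ : ℝ) (hπ₁ : π₁ ∈ Set.Icc (0 : ℝ) 1)
    (F : ℝ → ℝ) (hF : ∀ x, F x = (1 - π₁) * F₀ x + π₁ * F₁ x) :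
    sInf {γ : ℝ | γ ∈ Set.Ioc (0 : ℝ) 1 ∧
        IsCDF (fun x => (F x - (1 - γ) * F₀ x) / γ)} =
      π₁ - sSup {ε : ℝ | ε ∈ Set.Icc (0 : ℝ) 1 ∧
        IsSubCDF (fun x => π₁ * F₁ x - ε * F₀ x)} := by
  obtain ⟨hπ0, hπ1⟩ := hπ₁
  obtain ⟨hF₁mono, hF₁rc, hF₁bot, hF₁top⟩ := hF₁
  have hHrc : ∀ x, ContinuousWithinAt (fun x => π₁ * F₁ x) (Ici x) x :=
    fun x => (hF₁rc x).const_mul π₁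
  have hHbot : Tendsto (fun x => π₁ * F₁ x) atBot (𝓝 0) := by simpa using hF₁bot.const_mul π₁
  have hHtop : Tendsto (fun x => π₁ * F₁ x) atTop (𝓝 π₁) := by simpa using hF₁top.const_mul π₁
  obtain ⟨s, ⟨hs0, hsπ⟩, hM⟩ :=
    exists_setOf_monotone_sub_mul_eq_Iic hF₀ (hF₁mono.const_mul hπ0) hHbot hHtop
  have hA : {γ : ℝ | γ ∈ Ioc (0 : ℝ) 1 ∧ IsCDF (fun x => (F x - (1 - γ) * F₀ x) / γ)} =
      Ioc 0 1 ∩ Ici (π₁ - s) := by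
    ext γ
    simp only [mem_ofPred_eq, mem_inter_iff, mem_Ici, and_congr_right_iff]
    rintro ⟨hγ0, -⟩
    have hmix : (fun x => (F x - (1 - γ) * F₀ x) / γ) =
        fun x => (π₁ * F₁ x - (π₁ - γ) * F₀ x) / γ := by
      funext x
      rw [hF]
      ring
    rw [hmix, isCDF_sub_mul_div_iff hF₀ hHrc hHbot hHtop hγ0, ← sub_le_comm]
    exact Set.ext_iff.1 hM (π₁ - γ)
  have hB : {ε : ℝ | ε ∈ Icc (0 : ℝ) 1 ∧ IsSubCDF (fun x => π₁ * F₁ x - ε * F₀ x)} =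
      Icc 0 s := by
    ext ε
    simp only [mem_ofPred_eq, mem_Icc]
    refine ⟨fun ⟨⟨hε0, _⟩, hsub⟩ => ⟨hε0, ?_⟩, fun ⟨hε0, hεs⟩ => ⟨⟨hε0, by linarith⟩, ?_⟩⟩
    · exact hM.subset ((isSubCDF_sub_mul_iff hF₀ hHrc hHbot hHtop hπ1 hε0).1 hsub)
    · exact (isSubCDF_sub_mul_iff hF₀ hHrc hHbot hHtop hπ1 hε0).2 (hM.symm.subset hεs)
  rw [hA, hB, csSup_Icc hs0, csInf_Ioc_inter_Ici one_pos (by linarith) (by linarith)]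
end

section
/- Let F = (1 - π₁)F₀ + π₁F₁ with π₁ ∈ (0,1], where F₀ and F₁ are absolutely continuous CDFs with densities f₀ and f₁, and define π₁̲ = inf{ γ ∈ (0,1] : (F - (1-γ)F₀)/γ is a CDF }. Then π₁̲ < π₁ if and only if there exists c > 0 such that f₁(x) ≥ c·f₀(x) for Lebesgue-almost every x. -/
/-!
With `γ = π₁ (1 - c)`, the candidate `(F - (1 - γ) F₀) / γ` is the affine combination
`(1 - π₁/γ) F₀ + (π₁/γ) F₁` of two CDFs, so its limits and right-continuity come for free and it
is a CDF exactly when it is monotone. It has density `(π₁/γ) (f₁ - c f₀)`, and an indefinite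
integral is monotone exactly when the integrand is a.e. nonnegative (Lebesgue's differentiation
theorem gives the nontrivial direction). So `γ < π₁` is admissible iff `c f₀ ≤ f₁` a.e. with
`c = 1 - γ/π₁ > 0`; conversely any `c > 0` may be shrunk below `1` since `f₀ ≥ 0`.
-/

open Filter MeasureTheory Set

open Topology

lemma integrableOn_Iic_of_tendsto_integral_Iic {F f : ℝ → ℝ} {a : ℝ} (ha : a ≠ 0)
    (hd : ∀ x, F x = ∫ t in Iic x, f t) (hF : Tendsto F atTop (𝓝 a)) (x : ℝ) :
    IntegrableOn f (Iic x) := by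
  by_contra hx
  have hF0 : ∀ᶠ y in atTop, F y = 0 := by
    filter_upwards [eventually_ge_atTop x] with y hy
    rw [hd y]
    exact integral_undef fun h => hx (IntegrableOn.mono_set h (Iic_subset_Iic.2 hy))
  exact ha (tendsto_nhds_unique hF (tendsto_const_nhds.congr' (hF0.mono fun _ h => h.symm)))

lemma locallyIntegrable_of_forall_integrableOn_Iic {f : ℝ → ℝ}
    (hf : ∀ x, IntegrableOn f (Iic x)) : LocallyIntegrable f :=
  fun x => ⟨Iic (x + 1), Iic_mem_nhds (lt_add_one x), hf (x + 1)⟩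

/-- By Lebesgue's differentiation theorem, `g x` is a.e. the limit of its averages over the
intervals `[x - r, x + r]`, which are nonnegative by hypothesis. -/
lemma ae_nonneg_of_forall_intervalIntegral_nonneg {g : ℝ → ℝ} (hg : LocallyIntegrable g)
    (h : ∀ a b : ℝ, a ≤ b → 0 ≤ ∫ t in a..b, g t) :
    ∀ᵐ x, 0 ≤ g x := by
  filter_upwards [IsUnifLocDoublingMeasure.ae_tendsto_average (μ := volume) hg 1] with x hx
  have hlim : Tendsto (fun r => ⨍ y in Metric.closedBall x r, g y) (𝓝[>] 0) (𝓝 (g x)) := by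
    refine hx (fun _ => x) id tendsto_id ?_
    filter_upwards [self_mem_nhdsWithin] with r (hr : 0 < r)
    simpa using hr.le
  refine ge_of_tendsto hlim ?_
  filter_upwards [self_mem_nhdsWithin] with r (hr : 0 < r)
  rw [setAverage_eq, Real.closedBall_eq_Icc, integral_Icc_eq_integral_Ioc,
    ← intervalIntegral.integral_of_le (by linarith)]
  exact smul_nonneg (by positivity) (h _ _ (by linarith))

lemma monotone_integral_Iic_iff {f : ℝ → ℝ} (hf : ∀ x, IntegrableOn f (Iic x)) :
    Monotone (fun x => ∫ t in Iic x, f t) ↔ ∀ᵐ x, 0 ≤ f x := by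
  have hincr : ∀ a b, (∫ t in Iic a, f t) ≤ ∫ t in Iic b, f t ↔ 0 ≤ ∫ t in a..b, f t :=
    fun a b => by rw [← sub_nonneg, intervalIntegral.integral_Iic_sub_Iic (hf a) (hf b)]
  constructor
  · exact fun h => ae_nonneg_of_forall_intervalIntegral_nonneg
      (locallyIntegrable_of_forall_integrableOn_Iic hf) fun a b hab => (hincr a b).1 (h hab)
  · exact fun h a b hab => (hincr a b).2 (intervalIntegral.integral_nonneg_of_ae hab h)

lemma isCDF_affine_combination_iff {G₀ G₁ : ℝ → ℝ} (h₀ : IsCDF G₀) (h₁ : IsCDF G₁) {a b : ℝ}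
    (hab : a + b = 1) :
    IsCDF (fun x => a * G₀ x + b * G₁ x) ↔ Monotone (fun x => a * G₀ x + b * G₁ x) := by
  refine ⟨fun h => h.1, fun h => ⟨h, fun x => ?_, ?_, ?_⟩⟩
  · exact (continuousWithinAt_const.mul (h₀.2.1 x)).add (continuousWithinAt_const.mul (h₁.2.1 x))
  · simpa using ((tendsto_const_nhds (x := a)).mul h₀.2.2.1).add
      ((tendsto_const_nhds (x := b)).mul h₁.2.2.1)
  · simpa [hab] using ((tendsto_const_nhds (x := a)).mul h₀.2.2.2).add
      ((tendsto_const_nhds (x := b)).mul h₁.2.2.2)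

lemma isCDF_affine_combination_iff_ae_nonneg {G₀ G₁ g₀ g₁ : ℝ → ℝ} (h₀ : IsCDF G₀)
    (h₁ : IsCDF G₁) (hd₀ : ∀ x, G₀ x = ∫ t in Iic x, g₀ t)
    (hd₁ : ∀ x, G₁ x = ∫ t in Iic x, g₁ t) {a b : ℝ} (hab : a + b = 1) :
    IsCDF (fun x => a * G₀ x + b * G₁ x) ↔ ∀ᵐ x, 0 ≤ a * g₀ x + b * g₁ x := by
  have hi₀ := integrableOn_Iic_of_tendsto_integral_Iic one_ne_zero hd₀ h₀.2.2.2
  have hi₁ := integrableOn_Iic_of_tendsto_integral_Iic one_ne_zero hd₁ h₁.2.2.2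
  have hdens : (fun x => a * G₀ x + b * G₁ x) = fun x => ∫ t in Iic x, a * g₀ t + b * g₁ t := by
    ext x
    rw [integral_add ((hi₀ x).const_mul a) ((hi₁ x).const_mul b), integral_const_mul,
      integral_const_mul, hd₀, hd₁]
  rw [isCDF_affine_combination_iff h₀ h₁ hab, hdens, monotone_integral_Iic_iff
    (f := fun t => a * g₀ t + b * g₁ t) fun x => ((hi₀ x).const_mul a).add ((hi₁ x).const_mul b)]

lemma isCDF_mixture_residual_iff {F₀ F₁ f₀ f₁ : ℝ → ℝ} (hF₀ : IsCDF F₀) (hF₁ : IsCDF F₁)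
    (hd₀ : ∀ x, F₀ x = ∫ t in Iic x, f₀ t) (hd₁ : ∀ x, F₁ x = ∫ t in Iic x, f₁ t)
    {π γ : ℝ} (hπ : 0 < π) (hγ : 0 < γ) :
    IsCDF (fun x => ((1 - π) * F₀ x + π * F₁ x - (1 - γ) * F₀ x) / γ) ↔
      ∀ᵐ x, (1 - γ / π) * f₀ x ≤ f₁ x := by
  have hresidual : (fun x => ((1 - π) * F₀ x + π * F₁ x - (1 - γ) * F₀ x) / γ) =
      fun x => (1 - π / γ) * F₀ x + π / γ * F₁ x := by
    ext x
    field_simp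
    ring
  rw [hresidual, isCDF_affine_combination_iff_ae_nonneg hF₀ hF₁ hd₀ hd₁ (sub_add_cancel 1 _)]
  refine eventually_congr (Eventually.of_forall fun x => ?_)
  have hscale : (1 - π / γ) * f₀ x + π / γ * f₁ x = π / γ * (f₁ x - (1 - γ / π) * f₀ x) := by
    field_simp
    ring
  rw [hscale, mul_nonneg_iff_of_pos_left (div_pos hπ hγ), sub_nonneg]

theorem pi1_lower_lt_iff_general
    (F₀ F₁ : ℝ → ℝ) (hF₀ : IsCDF F₀) (hF₁ : IsCDF F₁)
    (f₀ f₁ : ℝ → ℝ) (hf₀ : ∀ x, 0 ≤ f₀ x)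
    (hd₀ : ∀ x, F₀ x = ∫ t in Set.Iic x, f₀ t)
    (hd₁ : ∀ x, F₁ x = ∫ t in Set.Iic x, f₁ t)
    (π₁ : ℝ) (hπ₁ : π₁ ∈ Set.Ioc (0 : ℝ) 1)
    (F : ℝ → ℝ) (hF : ∀ x, F x = (1 - π₁) * F₀ x + π₁ * F₁ x) :
    sInf {γ : ℝ | γ ∈ Set.Ioc (0 : ℝ) 1 ∧
        IsCDF (fun x => (F x - (1 - γ) * F₀ x) / γ)} < π₁ ↔
      ∃ c : ℝ, 0 < c ∧ ∀ᵐ x ∂(volume : Measure ℝ), c * f₀ x ≤ f₁ x := by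
  obtain ⟨hπ0, hπ1⟩ := hπ₁
  obtain rfl : F = fun x => (1 - π₁) * F₀ x + π₁ * F₁ x := funext hF
  set S := {γ : ℝ | γ ∈ Ioc (0 : ℝ) 1 ∧
    IsCDF (fun x => ((1 - π₁) * F₀ x + π₁ * F₁ x - (1 - γ) * F₀ x) / γ)}
  have hπS : π₁ ∈ S := ⟨⟨hπ0, hπ1⟩, by simpa [hπ0.ne'] using hF₁⟩
  rw [csInf_lt_iff ⟨0, fun γ hγ => hγ.1.1.le⟩ ⟨π₁, hπS⟩]
  constructor
  · rintro ⟨γ, ⟨⟨hγ0, -⟩, hγS⟩, hγπ⟩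
    refine ⟨1 - γ / π₁, by rwa [sub_pos, div_lt_one hπ0], ?_⟩
    exact (isCDF_mixture_residual_iff hF₀ hF₁ hd₀ hd₁ hπ0 hγ0).1 hγS
  · rintro ⟨c, hc0, hc⟩
    set c' := min c (1 / 2)
    have hc'0 : 0 < c' := lt_min hc0 one_half_pos
    have hc'1 : c' < 1 := (min_le_right _ _).trans_lt one_half_lt_one
    refine ⟨π₁ * (1 - c'), ⟨⟨by nlinarith, by nlinarith⟩, ?_⟩, by nlinarith⟩
    rw [isCDF_mixture_residual_iff hF₀ hF₁ hd₀ hd₁ hπ0 (by nlinarith),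
      mul_div_cancel_left₀ _ hπ0.ne', sub_sub_cancel]
    filter_upwards [hc] with x hx
    exact (mul_le_mul_of_nonneg_right (min_le_left _ _) (hf₀ x)).trans hx

/-- `π₁̲ < π₁` if and only if there is `c > 0` with `f₁ ≥ c f₀` Lebesgue-a.e. -/
theorem pi1_lower_lt_iff
    (F₀ F₁ : ℝ → ℝ) (hF₀ : IsCDF F₀) (hF₁ : IsCDF F₁)
    (f₀ f₁ : ℝ → ℝ) (hf₀ : ∀ x, 0 ≤ f₀ x) (hf₁ : ∀ x, 0 ≤ f₁ x)
    (hf₀meas : Measurable f₀) (hf₁meas : Measurable f₁)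
    (hd₀ : ∀ x, F₀ x = ∫ t in Set.Iic x, f₀ t)
    (hd₁ : ∀ x, F₁ x = ∫ t in Set.Iic x, f₁ t)
    (π₁ : ℝ) (hπ₁ : π₁ ∈ Set.Ioc (0 : ℝ) 1)
    (F : ℝ → ℝ) (hF : ∀ x, F x = (1 - π₁) * F₀ x + π₁ * F₁ x) :
    sInf {γ : ℝ | γ ∈ Set.Ioc (0 : ℝ) 1 ∧
        IsCDF (fun x => (F x - (1 - γ) * F₀ x) / γ)} < π₁ ↔
      ∃ c : ℝ, 0 < c ∧ ∀ᵐ x ∂(volume : Measure ℝ), c * f₀ x ≤ f₁ x :=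
  pi1_lower_lt_iff_general F₀ F₁ hF₀ hF₁ f₀ f₁ hf₀ hd₀ hd₁ π₁ hπ₁ F hF
end

section
/- Let P₁, P₂, … be a sequence of p-values (random variables) with common continuous CDF F and empirical CDF Fₙ(x) = (1/n)·#{ i ≤ n : Pᵢ ≤ x }. Assume (I) the sequence (P₁, P₂, …) is strongly stationary, and (II) for every x, Fₙ(x) → F(x) in probability as n → ∞. Then ‖Fₙ - F‖_∞ = sup_x |Fₙ(x) - F(x)| → 0 almost surely as n → ∞. -/
open Filter MeasureTheory Set ProbabilityTheory

/-- Empirical CDF of the first `n` among a sequence of random variables. -/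
noncomputable def empCDF {Ω : Type*} (P : ℕ → Ω → ℝ) (n : ℕ) (ω : Ω) (x : ℝ) : ℝ :=
  (((Finset.range n).filter (fun i => P i ω ≤ x)).card : ℝ) / (n : ℝ)

/-!
Read `(P₁, P₂, …)` as a random point of `ℕ → ℝ`: stationarity says that the left shift `T`
preserves its law, and `Fₙ(x)` is the Birkhoff average `Aₙ g` of `g f = 1{f 0 ≤ x}`.
Garsia's maximal ergodic lemma yields the maximal inequality
`μ {∃ k, ε < A_k h} ≤ ∫ h / ε` for `h ≥ 0`. Since `Aₙ g` differs from the `n`-average of `A_N g`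
by at most `2N/n`, applying it to `h = |A_N g - F x|` bounds the probability that `Aₙ g`
deviates from `F x` infinitely often by a multiple of `∫ |A_N g - F x|`, which tends to `0`
because `F_N(x) → F(x)` in probability and everything is bounded. So `Fₙ(x) → F(x)` almost
surely for each `x`. Applying this simultaneously at countably many points where the continuous
`F` takes every rational value in `(0, 1)`, monotonicity of `Fₙ` and `F` upgrades pointwise to
uniform convergence (Pólya's argument).
-/

open Topology

section MaximalErgodic

variable {α : Type*} {T : α → α} {u : α → ℝ}

noncomputable def birkhoffMax (T : α → α) (u : α → ℝ) (n : ℕ) : α → ℝ :=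
  (Finset.range (n + 1)).sup' Finset.nonempty_range_add_one (birkhoffSum T u)

theorem birkhoffMax_apply (n : ℕ) (a : α) :
    birkhoffMax T u n a =
      (Finset.range (n + 1)).sup' Finset.nonempty_range_add_one (birkhoffSum T u · a) :=
  Finset.sup'_apply _ _ _

theorem birkhoffSum_le_birkhoffMax {k n : ℕ} (hk : k ≤ n) (a : α) :
    birkhoffSum T u k a ≤ birkhoffMax T u n a := by
  rw [birkhoffMax_apply]
  exact Finset.le_sup' (birkhoffSum T u · a) (Finset.mem_range_succ_iff.2 hk)

theorem birkhoffMax_nonneg (n : ℕ) (a : α) : 0 ≤ birkhoffMax T u n a :=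
  (birkhoffSum_zero T u a).symm.trans_le (birkhoffSum_le_birkhoffMax n.zero_le a)

theorem monotone_birkhoffMax : Monotone (birkhoffMax T u) := fun _ _ hmn =>
  Finset.sup'_mono _ (Finset.range_subset_range.2 (Nat.succ_le_succ hmn)) _

/-- Where the running maximum is positive it is attained at some `k ≥ 1`, and
`S_k u = u + S_{k-1} u ∘ T`. -/
theorem birkhoffMax_le_add_birkhoffMax_apply {n : ℕ} {a : α} (ha : 0 < birkhoffMax T u n a) :
    birkhoffMax T u n a ≤ u a + birkhoffMax T u n (T a) := by
  obtain ⟨k, hk, hmax⟩ := (Finset.range (n + 1)).exists_mem_eq_sup'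
    Finset.nonempty_range_add_one (birkhoffSum T u · a)
  rw [← birkhoffMax_apply] at hmax
  obtain _ | j := k
  · rw [hmax, birkhoffSum_zero] at ha
    exact (lt_irrefl 0 ha).elim
  · rw [hmax, birkhoffSum_succ']
    rw [Finset.mem_range] at hk
    exact add_le_add_right (birkhoffSum_le_birkhoffMax (by omega) _) _

variable [MeasurableSpace α] {μ : Measure α}

theorem measurable_birkhoffSum (hT : Measurable T) (hu : Measurable u) (k : ℕ) :
    Measurable (birkhoffSum T u k) :=
  Finset.measurable_sum _ fun i _ => hu.comp (hT.iterate i)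

theorem integrable_birkhoffSum (hT : MeasurePreserving T μ μ) (hu : Integrable u μ) (k : ℕ) :
    Integrable (birkhoffSum T u k) μ :=
  integrable_finsetSum _ fun i _ => (hT.iterate i).integrable_comp_of_integrable hu

theorem measurable_birkhoffMax (hT : Measurable T) (hu : Measurable u) (n : ℕ) :
    Measurable (birkhoffMax T u n) :=
  Finset.measurable_sup' _ fun k _ => measurable_birkhoffSum hT hu k

theorem integrable_birkhoffMax (hT : MeasurePreserving T μ μ) (hu : Integrable u μ) (n : ℕ) :
    Integrable (birkhoffMax T u n) μ :=
  Finset.sup'_induction (p := (Integrable · μ)) _ _ (fun _ hf _ hg => hf.sup hg)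
    fun k _ => integrable_birkhoffSum hT hu k

/-- Garsia's maximal ergodic lemma. -/
theorem setIntegral_birkhoffMax_pos_nonneg (hT : MeasurePreserving T μ μ) (hu : Measurable u)
    (hui : Integrable u μ) (n : ℕ) :
    0 ≤ ∫ a in {a | 0 < birkhoffMax T u n a}, u a ∂μ := by
  set M := birkhoffMax T u n
  set E := {a | 0 < M a}
  have hE : MeasurableSet E :=
    measurableSet_lt measurable_const (measurable_birkhoffMax hT.measurable hu n)
  have hM : Integrable M μ := integrable_birkhoffMax hT hui n
  have hMT : Integrable (fun a => M (T a)) μ := hT.integrable_comp_of_integrable hM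
  have h_le : ∫ a in E, M a ∂μ ≤ ∫ a in E, (u a + M (T a)) ∂μ :=
    setIntegral_mono_on hM.integrableOn (hui.add hMT).integrableOn hE
      fun a ha => birkhoffMax_le_add_birkhoffMax_apply ha
  have h_restrict : ∫ a in E, M (T a) ∂μ ≤ ∫ a, M (T a) ∂μ :=
    setIntegral_le_integral hMT (ae_of_all _ fun a => birkhoffMax_nonneg n (T a))
  have h_invariant : ∫ a, M (T a) ∂μ = ∫ a, M a ∂μ := by
    have hM' : AEStronglyMeasurable M (μ.map T) := by rw [hT.map_eq]; exact hM.aestronglyMeasurable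
    rw [← integral_map hT.aemeasurable hM', hT.map_eq]
  have h_supp : ∫ a in E, M a ∂μ = ∫ a, M a ∂μ :=
    setIntegral_eq_integral_of_forall_compl_eq_zero fun a ha =>
      le_antisymm (not_lt.1 ha) (birkhoffMax_nonneg n a)
  rw [integral_add hui.integrableOn hMT.integrableOn] at h_le
  linarith

theorem measure_exists_lt_birkhoffAverage_le [IsFiniteMeasure μ] (hT : MeasurePreserving T μ μ)
    {h : α → ℝ} (hh : Measurable h) (hhi : Integrable h μ) (h0 : 0 ≤ h) {ε : ℝ} (hε : 0 < ε) :
    μ {a | ∃ k, ε < birkhoffAverage ℝ T h k a} ≤ ENNReal.ofReal ((∫ a, h a ∂μ) / ε) := by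
  set u := fun a => h a - ε
  have hsum : ∀ k a, birkhoffSum T u k a = birkhoffSum T h k a - k * ε := fun k a => by
    simp [u, birkhoffSum, Finset.sum_sub_distrib]
  have hsub : {a | ∃ k, ε < birkhoffAverage ℝ T h k a} ⊆
      ⋃ n, {a | 0 < birkhoffMax T u n a} := by
    rintro a ⟨k, hk⟩
    have hk0 : 0 < k := Nat.pos_of_ne_zero fun h0 => by simp [h0] at hk; linarith
    rw [birkhoffAverage, smul_eq_mul, ← div_eq_inv_mul, lt_div_iff₀ (by positivity)] at hk
    refine mem_iUnion.2 ⟨k, lt_of_lt_of_le ?_ (birkhoffSum_le_birkhoffMax le_rfl a)⟩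
    rw [hsum]
    linarith
  have hbound : ∀ n, μ {a | 0 < birkhoffMax T u n a} ≤ ENNReal.ofReal ((∫ a, h a ∂μ) / ε) := by
    intro n
    set E := {a | 0 < birkhoffMax T u n a}
    have hgarsia : 0 ≤ ∫ a in E, (h a - ε) ∂μ := setIntegral_birkhoffMax_pos_nonneg hT
      (hh.sub measurable_const) (hhi.sub (integrable_const ε)) n
    rw [integral_sub hhi.integrableOn integrableOn_const, setIntegral_const, smul_eq_mul,
      measureReal_def] at hgarsia
    have hrestrict : ∫ a in E, h a ∂μ ≤ ∫ a, h a ∂μ := setIntegral_le_integral hhi (ae_of_all _ h0)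
    rw [ENNReal.le_ofReal_iff_toReal_le (measure_ne_top μ E)
      (div_nonneg (integral_nonneg h0) hε.le), le_div_iff₀ hε]
    linarith
  calc μ _ ≤ μ (⋃ n, {a | 0 < birkhoffMax T u n a}) := measure_mono hsub
    _ = ⨆ n, μ {a | 0 < birkhoffMax T u n a} :=
      Monotone.measure_iUnion fun m n hmn a ha => ha.trans_le (monotone_birkhoffMax hmn a)
    _ ≤ _ := iSup_le hbound

end MaximalErgodic

section BirkhoffAverage

variable {α : Type*} {T : α → α}

theorem abs_birkhoffSum_le {g : α → ℝ} {C : ℝ} (hC : ∀ a, |g a| ≤ C) (k : ℕ) (a : α) :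
    |birkhoffSum T g k a| ≤ k * C :=
  calc |birkhoffSum T g k a| ≤ ∑ i ∈ Finset.range k, |g (T^[i] a)| :=
        Finset.abs_sum_le_sum_abs _ _
    _ ≤ k * C := by
        simpa using Finset.sum_le_card_nsmul (Finset.range k) _ C fun i _ => hC (T^[i] a)

theorem abs_birkhoffAverage_iterate_sub_le {g : α → ℝ} {C : ℝ} (hC : ∀ a, |g a| ≤ C)
    (n j : ℕ) (a : α) :
    |birkhoffAverage ℝ T g n (T^[j] a) - birkhoffAverage ℝ T g n a| ≤ 2 * j * C / n := by
  have hswap : birkhoffSum T g n (T^[j] a) - birkhoffSum T g n a =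
      birkhoffSum T g j (T^[n] a) - birkhoffSum T g j a := by
    have h1 := birkhoffSum_add T g j n a
    have h2 := birkhoffSum_add T g n j a
    rw [add_comm j n, h2] at h1
    linarith
  rw [birkhoffAverage, birkhoffAverage, smul_eq_mul, smul_eq_mul, ← mul_sub, hswap, abs_mul,
    abs_inv, Nat.abs_cast, inv_mul_eq_div]
  gcongr
  calc |birkhoffSum T g j (T^[n] a) - birkhoffSum T g j a|
      ≤ |birkhoffSum T g j (T^[n] a)| + |birkhoffSum T g j a| := abs_sub _ _
    _ ≤ j * C + j * C := add_le_add (abs_birkhoffSum_le hC j _) (abs_birkhoffSum_le hC j a)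
    _ = 2 * j * C := by ring

theorem birkhoffAverage_birkhoffAverage_comm (g : α → ℝ) (m n : ℕ) :
    birkhoffAverage ℝ T (birkhoffAverage ℝ T g m) n =
      birkhoffAverage ℝ T (birkhoffAverage ℝ T g n) m := by
  funext a
  simp only [birkhoffAverage, birkhoffSum, smul_eq_mul, Finset.mul_sum,
    ← Function.iterate_add_apply]
  rw [Finset.sum_comm]
  refine Finset.sum_congr rfl fun i _ => Finset.sum_congr rfl fun j _ => ?_
  rw [add_comm i j]
  ring

theorem abs_birkhoffAverage_le (ψ : α → ℝ) (n : ℕ) (a : α) :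
    |birkhoffAverage ℝ T ψ n a| ≤ birkhoffAverage ℝ T (fun b => |ψ b|) n a := by
  simp only [birkhoffAverage, birkhoffSum, smul_eq_mul, abs_mul, abs_inv, Nat.abs_cast]
  gcongr
  exact Finset.abs_sum_le_sum_abs _ _

theorem birkhoffAverage_le_of_forall {ψ : α → ℝ} {K : ℝ} {n : ℕ} (hn : n ≠ 0) {a : α}
    (h : ∀ j < n, ψ (T^[j] a) ≤ K) : birkhoffAverage ℝ T ψ n a ≤ K := by
  have hn' : (0 : ℝ) < n := by positivity
  rw [birkhoffAverage, smul_eq_mul, inv_mul_le_iff₀ hn', birkhoffSum]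
  simpa using Finset.sum_le_card_nsmul _ _ K fun j hj => h j (Finset.mem_range.1 hj)

theorem birkhoffAverage_sub_const (ψ : α → ℝ) (c : ℝ) {n : ℕ} (hn : n ≠ 0) (a : α) :
    birkhoffAverage ℝ T (fun b => ψ b - c) n a = birkhoffAverage ℝ T ψ n a - c := by
  have hconst : birkhoffAverage ℝ T (fun _ => c) n = fun _ => c :=
    birkhoffAverage_of_comp_eq (R := ℝ) rfl (Nat.cast_ne_zero.2 hn)
  have := congrFun (congrFun
    (birkhoffAverage_sub (R := ℝ) (f := T) (g := ψ) (g' := fun _ => c)) n) a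
  rwa [Pi.sub_apply, Pi.sub_apply, hconst] at this

theorem abs_birkhoffAverage_sub_le {φ : α → ℝ} {K : ℝ} {N : ℕ} (hN : N ≠ 0) {a : α}
    (h : ∀ j < N, |φ (T^[j] a) - φ a| ≤ K) :
    |birkhoffAverage ℝ T φ N a - φ a| ≤ K := by
  rw [← birkhoffAverage_sub_const φ (φ a) hN]
  exact (abs_birkhoffAverage_le _ N a).trans (birkhoffAverage_le_of_forall hN h)

theorem abs_birkhoffAverage_sub_le_birkhoffAverage {g : α → ℝ} {C : ℝ} (hC : ∀ a, |g a| ≤ C)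
    (c : ℝ) {N n : ℕ} (hN : N ≠ 0) (hn : n ≠ 0) (a : α) :
    |birkhoffAverage ℝ T g n a - c| ≤
      birkhoffAverage ℝ T (fun b => |birkhoffAverage ℝ T g N b - c|) n a + 2 * N * C / n := by
  have hC0 : 0 ≤ C := (abs_nonneg _).trans (hC a)
  have hshift : |birkhoffAverage ℝ T (birkhoffAverage ℝ T g n) N a - birkhoffAverage ℝ T g n a|
      ≤ 2 * N * C / n :=
    abs_birkhoffAverage_sub_le hN fun j hj =>
      (abs_birkhoffAverage_iterate_sub_le hC n j a).trans (by gcongr)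
  have hdev : |birkhoffAverage ℝ T (birkhoffAverage ℝ T g N) n a - c| ≤
      birkhoffAverage ℝ T (fun b => |birkhoffAverage ℝ T g N b - c|) n a := by
    rw [← birkhoffAverage_sub_const _ c hn]
    exact abs_birkhoffAverage_le _ n a
  rw [birkhoffAverage_birkhoffAverage_comm] at hdev
  calc |birkhoffAverage ℝ T g n a - c|
      ≤ |birkhoffAverage ℝ T g n a - birkhoffAverage ℝ T (birkhoffAverage ℝ T g n) N a| +
          |birkhoffAverage ℝ T (birkhoffAverage ℝ T g n) N a - c| := abs_sub_le _ _ _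
    _ ≤ 2 * N * C / n + birkhoffAverage ℝ T (fun b => |birkhoffAverage ℝ T g N b - c|) n a :=
      add_le_add (by rwa [abs_sub_comm]) hdev
    _ = _ := add_comm _ _

end BirkhoffAverage

section PointwiseErgodic

variable {α : Type*} [MeasurableSpace α] {μ : Measure α} {T : α → α} {g : α → ℝ} {C : ℝ}

theorem measurable_birkhoffAverage (hT : Measurable T) (hg : Measurable g) (n : ℕ) :
    Measurable (birkhoffAverage ℝ T g n) :=
  (measurable_birkhoffSum hT hg n).const_smul ((n : ℝ)⁻¹)

theorem integrable_birkhoffAverage (hT : MeasurePreserving T μ μ) (hg : Integrable g μ) (n : ℕ) :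
    Integrable (birkhoffAverage ℝ T g n) μ :=
  (integrable_birkhoffSum hT hg n).smul ((n : ℝ)⁻¹)

theorem ae_eventually_abs_birkhoffAverage_sub_le [IsFiniteMeasure μ]
    (hT : MeasurePreserving T μ μ) (hg : Measurable g) (hC : ∀ a, |g a| ≤ C) {c : ℝ}
    (hL1 : Tendsto (fun N => ∫ a, |birkhoffAverage ℝ T g N a - c| ∂μ) atTop (𝓝 0))
    {ε : ℝ} (hε : 0 < ε) :
    ∀ᵐ a ∂μ, ∀ᶠ n in atTop, |birkhoffAverage ℝ T g n a - c| ≤ ε := by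
  have hgi : Integrable g μ :=
    Integrable.of_bound hg.aestronglyMeasurable C (ae_of_all _ fun a => (hC a).trans_eq' rfl)
  set B := {a | ∃ᶠ n in atTop, ε < |birkhoffAverage ℝ T g n a - c|}
  have hB : ∀ N ≠ 0,
      μ B ≤ ENNReal.ofReal ((∫ a, |birkhoffAverage ℝ T g N a - c| ∂μ) / (ε / 2)) := by
    intro N hN
    refine (measure_mono fun a ha => ?_).trans (measure_exists_lt_birkhoffAverage_le
      (h := fun b => |birkhoffAverage ℝ T g N b - c|) hT
      (((measurable_birkhoffAverage hT.measurable hg N).sub measurable_const).abs)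
      ((integrable_birkhoffAverage hT hgi N).sub (integrable_const c)).abs
      (fun _ => abs_nonneg _) (half_pos hε))
    have hsmall : ∀ᶠ n : ℕ in atTop, 2 * N * C / n ≤ ε / 2 :=
      (tendsto_const_div_atTop_nhds_zero_nat (2 * N * C)).eventually (ge_mem_nhds (half_pos hε))
    obtain ⟨n, hdev, hn, hsmall⟩ := (ha.and_eventually ((eventually_ne_atTop 0).and hsmall)).exists
    have := abs_birkhoffAverage_sub_le_birkhoffAverage (T := T) hC c hN hn a
    exact ⟨n, by linarith⟩
  have hB0 : μ B = 0 := by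
    refine nonpos_iff_eq_zero.1 (ge_of_tendsto ?_ ((eventually_ne_atTop 0).mono hB))
    simpa using ENNReal.tendsto_ofReal (hL1.div_const (ε / 2))
  filter_upwards [measure_eq_zero_iff_ae_notMem.1 hB0] with a ha
  simpa [B] using ha

theorem ae_tendsto_birkhoffAverage_of_tendsto_integral [IsFiniteMeasure μ]
    (hT : MeasurePreserving T μ μ) (hg : Measurable g) (hC : ∀ a, |g a| ≤ C) {c : ℝ}
    (hL1 : Tendsto (fun N => ∫ a, |birkhoffAverage ℝ T g N a - c| ∂μ) atTop (𝓝 0)) :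
    ∀ᵐ a ∂μ, Tendsto (fun n => birkhoffAverage ℝ T g n a) atTop (𝓝 c) := by
  have hall := ae_all_iff.2 fun m : ℕ =>
    ae_eventually_abs_birkhoffAverage_sub_le hT hg hC hL1 (ε := 1 / (m + 1)) (by positivity)
  filter_upwards [hall] with a ha
  refine Metric.tendsto_nhds.2 fun ε hε => ?_
  obtain ⟨m, hm⟩ := exists_nat_one_div_lt hε
  filter_upwards [ha m] with n hn
  exact (Real.dist_eq _ _).trans_lt (hn.trans_lt hm)

end PointwiseErgodic

theorem tendsto_integral_abs_sub_of_tendstoInMeasure {α : Type*} [MeasurableSpace α]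
    {μ : Measure α} [IsFiniteMeasure μ] {f : ℕ → α → ℝ} {g : α → ℝ} {B : ℝ}
    (hf : ∀ n, AEStronglyMeasurable (f n) μ) (hB : ∀ n a, |f n a| ≤ B) (hg : Integrable g μ)
    (hfg : TendstoInMeasure μ f atTop g) :
    Tendsto (fun n => ∫ a, |f n a - g a| ∂μ) atTop (𝓝 0) := by
  have hui : UnifIntegrable f 1 μ := by
    refine unifIntegrable_of le_rfl ENNReal.one_ne_top hf fun ε _ => ⟨B.toNNReal + 1, fun n => ?_⟩
    have hempty : {a | B.toNNReal + 1 ≤ ‖f n a‖₊} = ∅ := by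
      refine eq_empty_of_forall_notMem fun a ha => ?_
      have : (B.toNNReal : ℝ) + 1 ≤ |f n a| := by exact_mod_cast ha
      linarith [hB n a, B.le_coe_toNNReal]
    simp [hempty]
  have hLp := tendsto_Lp_finite_of_tendstoInMeasure le_rfl ENNReal.one_ne_top hf
    (memLp_one_iff_integrable.2 hg) hui hfg
  have heq : ∀ n, ∫ a, |f n a - g a| ∂μ = (eLpNorm (f n - g) 1 μ).toReal := fun n => by
    rw [eLpNorm_one_eq_lintegral_enorm, ← integral_norm_eq_lintegral_enorm
      ((hf n).sub hg.aestronglyMeasurable)]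
    rfl
  simp_rw [heq]
  exact (ENNReal.tendsto_toReal ENNReal.zero_ne_top).comp hLp

def seqShift {β : Type*} (f : ℕ → β) : ℕ → β := fun i => f (i + 1)

theorem seqShift_iterate {β : Type*} (k : ℕ) (f : ℕ → β) (i : ℕ) :
    seqShift^[k] f i = f (i + k) := by
  induction k generalizing f with
  | zero => rfl
  | succ k ih => rw [Function.iterate_succ_apply, ih]; rfl

theorem measurable_seqShift {β : Type*} [MeasurableSpace β] :
    Measurable (seqShift : (ℕ → β) → ℕ → β) :=
  measurable_pi_lambda _ fun i => measurable_pi_apply (i + 1)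

section EmpCDF

variable {Ω : Type*} (P : ℕ → Ω → ℝ)

theorem empCDF_eq_birkhoffAverage (n : ℕ) (ω : Ω) (x : ℝ) :
    empCDF P n ω x = birkhoffAverage ℝ seqShift (fun f => if f 0 ≤ x then 1 else 0) n
      (fun i => P i ω) := by
  simp only [empCDF, birkhoffAverage, birkhoffSum, seqShift_iterate, zero_add, smul_eq_mul,
    Finset.card_filter]
  push_cast
  rw [div_eq_inv_mul]

theorem empCDF_nonneg (n : ℕ) (ω : Ω) (x : ℝ) : 0 ≤ empCDF P n ω x := by
  unfold empCDF
  positivity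

theorem empCDF_le_one (n : ℕ) (ω : Ω) (x : ℝ) : empCDF P n ω x ≤ 1 := by
  unfold empCDF
  refine div_le_one_of_le₀ ?_ n.cast_nonneg
  exact_mod_cast (Finset.card_filter_le _ _).trans (Finset.card_range n).le

theorem monotone_empCDF (n : ℕ) (ω : Ω) : Monotone (empCDF P n ω) := fun x y hxy => by
  unfold empCDF
  gcongr

theorem ae_tendsto_empCDF_of_tendstoInMeasure [MeasurableSpace Ω] {Pr : Measure Ω}
    [IsFiniteMeasure Pr] (hmeas : ∀ i, Measurable (P i))
    (hstat : Measure.map (fun ω => (fun i => P i ω : ℕ → ℝ)) Pr =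
      Measure.map (fun ω => (fun i => P (i + 1) ω : ℕ → ℝ)) Pr)
    {x c : ℝ} (hconv : TendstoInMeasure Pr (fun n ω => empCDF P n ω x) atTop (fun _ => c)) :
    ∀ᵐ ω ∂Pr, Tendsto (fun n => empCDF P n ω x) atTop (𝓝 c) := by
  set seq : Ω → ℕ → ℝ := fun ω i => P i ω
  have hseq : Measurable seq := measurable_pi_lambda _ hmeas
  set g : (ℕ → ℝ) → ℝ := fun f => if f 0 ≤ x then 1 else 0
  have hg : Measurable g :=
    Measurable.ite (measurableSet_le (measurable_pi_apply 0) measurable_const)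
      measurable_const measurable_const
  have hg1 : ∀ f, |g f| ≤ 1 := fun f => by by_cases h : f 0 ≤ x <;> simp [g, h]
  have hT : MeasurePreserving seqShift (Pr.map seq) (Pr.map seq) :=
    ⟨measurable_seqShift, by rw [Measure.map_map measurable_seqShift hseq]; exact hstat.symm⟩
  have hemp : ∀ n ω, empCDF P n ω x = birkhoffAverage ℝ seqShift g n (seq ω) :=
    fun n ω => empCDF_eq_birkhoffAverage P n ω x
  have hL1 : Tendsto (fun N => ∫ f, |birkhoffAverage ℝ seqShift g N f - c| ∂(Pr.map seq))
      atTop (𝓝 0) := by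
    have hA := measurable_birkhoffAverage measurable_seqShift hg
    have hmap : ∀ N, ∫ f, |birkhoffAverage ℝ seqShift g N f - c| ∂(Pr.map seq) =
        ∫ ω, |empCDF P N ω x - c| ∂Pr := fun N => by
      simp only [integral_map hseq.aemeasurable ((hA N).sub_const c).abs.aestronglyMeasurable,
        hemp]
    simp_rw [hmap]
    refine tendsto_integral_abs_sub_of_tendstoInMeasure (B := 1)
      (fun n => by simp only [hemp]; exact ((hA n).comp hseq).aestronglyMeasurable)
      (fun n ω => abs_le.2 ⟨by linarith [empCDF_nonneg P n ω x], empCDF_le_one P n ω x⟩)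
      (integrable_const c) hconv
  filter_upwards [ae_of_ae_map hseq.aemeasurable
    (ae_tendsto_birkhoffAverage_of_tendsto_integral hT hg hg1 hL1)] with ω hω
  simpa only [hemp] using hω

end EmpCDF

section Grid

variable {G F : ℝ → ℝ} {m : ℕ} {δ : ℝ}

theorem le_add_of_forall_quantile_le (hG : Monotone G) (hG1 : ∀ x, G x ≤ 1) (hF : Monotone F)
    (hm : m ≠ 0) (hδ : 0 ≤ δ)
    (hgrid : ∀ j ∈ Finset.Ioo 0 m, ∃ t, F t = j / m ∧ G t ≤ F t + δ) {x : ℝ} (hFx : 0 ≤ F x) :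
    G x ≤ F x + δ + 1 / m := by
  have hm' : (0 : ℝ) < m := by positivity
  set j := ⌊m * F x⌋₊ + 1
  have hj_gt : (m : ℝ) * F x < j := by
    push_cast [j]
    exact Nat.lt_floor_add_one _
  have hj_le : (j : ℝ) / m ≤ F x + 1 / m := by
    rw [div_le_iff₀ hm', add_mul, one_div_mul_cancel hm'.ne']
    push_cast [j]
    linarith [Nat.floor_le (by positivity : 0 ≤ m * F x)]
  by_cases hjm : j < m
  · obtain ⟨t, hFt, hGt⟩ := hgrid j (Finset.mem_Ioo.2 ⟨Nat.succ_pos _, hjm⟩)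
    have hxt : x ≤ t := (hF.reflect_lt (by rw [hFt, lt_div_iff₀ hm']; linarith)).le
    linarith [hG hxt]
  · have hmj : (m : ℝ) ≤ j := by exact_mod_cast not_lt.1 hjm
    have : 1 ≤ (j : ℝ) / m := (one_le_div hm').2 hmj
    linarith [hG1 x]

theorem le_add_of_forall_quantile_ge (hG : Monotone G) (hG0 : ∀ x, 0 ≤ G x) (hF : Monotone F)
    (hm : m ≠ 0) (hδ : 0 ≤ δ)
    (hgrid : ∀ j ∈ Finset.Ioo 0 m, ∃ t, F t = j / m ∧ F t ≤ G t + δ) {x : ℝ} (hFx : F x ≤ 1) :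
    F x ≤ G x + δ + 1 / m := by
  have hm' : (0 : ℝ) < m := by positivity
  by_cases hsmall : m * F x ≤ 1
  · have : F x ≤ 1 / m := by rw [le_div_iff₀ hm']; linarith
    linarith [hG0 x]
  · obtain ⟨j, hj⟩ : ∃ j, ⌈m * F x⌉₊ = j + 1 :=
      Nat.exists_eq_add_one.2 (Nat.lt_ceil.2 (by push_cast; linarith))
    have hj0 : 0 < j := by
      have := Nat.lt_ceil.2 (show ((1 : ℕ) : ℝ) < m * F x by push_cast; linarith)
      omega
    have hj_lt : (j : ℝ) < m * F x := by
      have := Nat.ceil_lt_add_one (show 0 ≤ (m : ℝ) * F x by nlinarith)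
      rw [hj] at this
      push_cast at this
      linarith
    have hj_le : F x ≤ (j : ℝ) / m + 1 / m := by
      have := Nat.le_ceil ((m : ℝ) * F x)
      rw [hj] at this
      push_cast at this
      rw [← add_div, le_div_iff₀ hm']
      linarith
    have hjm : j < m := by
      have : (j : ℝ) < m := hj_lt.trans_le (by nlinarith)
      exact_mod_cast this
    obtain ⟨t, hFt, hGt⟩ := hgrid j (Finset.mem_Ioo.2 ⟨hj0, hjm⟩)
    have htx : t ≤ x := (hF.reflect_lt (by rw [hFt, div_lt_iff₀ hm']; linarith)).le
    linarith [hG htx]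

end Grid

theorem tendsto_iSup_abs_sub_of_tendsto_quantiles {G : ℕ → ℝ → ℝ} {F : ℝ → ℝ} {D : Set ℝ}
    (hG : ∀ n, Monotone (G n)) (hG0 : ∀ n x, 0 ≤ G n x) (hG1 : ∀ n x, G n x ≤ 1)
    (hF : Monotone F) (hF0 : ∀ x, 0 ≤ F x) (hF1 : ∀ x, F x ≤ 1)
    (hD : ∀ q : ℚ, (q : ℝ) ∈ Ioo 0 1 → ∃ t ∈ D, F t = q)
    (hconv : ∀ t ∈ D, Tendsto (fun n => G n t) atTop (𝓝 (F t))) :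
    Tendsto (fun n => ⨆ x, |G n x - F x|) atTop (𝓝 0) := by
  refine Metric.tendsto_nhds.2 fun ε hε => ?_
  obtain ⟨k, hk⟩ := exists_nat_one_div_lt (half_pos hε)
  set m := k + 1
  have hm' : (0 : ℝ) < m := by positivity
  have hgrid : ∀ j ∈ Finset.Ioo 0 m,
      ∀ᶠ n in atTop, ∃ t, F t = j / m ∧ |G n t - F t| ≤ ε / 2 := by
    intro j hj
    obtain ⟨hj0, hjm⟩ := Finset.mem_Ioo.1 hj
    obtain ⟨t, htD, hFt⟩ := hD (j / m) (by
      push_cast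
      exact ⟨by positivity, (div_lt_one hm').2 (by exact_mod_cast hjm)⟩)
    push_cast at hFt
    filter_upwards [(hconv t htD).eventually (Metric.closedBall_mem_nhds _ (half_pos hε))]
      with n hn
    exact ⟨t, hFt, hn⟩
  filter_upwards [(Finset.Ioo 0 m).eventually_all.2 hgrid] with n hn
  have hup : ∀ j ∈ Finset.Ioo 0 m, ∃ t, F t = j / m ∧ G n t ≤ F t + ε / 2 := fun j hj =>
    (hn j hj).imp fun t ht => ⟨ht.1, by linarith [(abs_le.1 ht.2).2]⟩
  have hlow : ∀ j ∈ Finset.Ioo 0 m, ∃ t, F t = j / m ∧ F t ≤ G n t + ε / 2 := fun j hj =>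
    (hn j hj).imp fun t ht => ⟨ht.1, by linarith [(abs_le.1 ht.2).1]⟩
  have hbound (x : ℝ) : |G n x - F x| ≤ ε / 2 + 1 / m := by
    have h1 := le_add_of_forall_quantile_le (hG n) (hG1 n) hF k.succ_ne_zero (half_pos hε).le hup
      (hF0 x)
    have h2 := le_add_of_forall_quantile_ge (hG n) (hG0 n) hF k.succ_ne_zero (half_pos hε).le hlow
      (hF1 x)
    exact abs_sub_le_iff.2 ⟨by linarith, by linarith⟩
  rw [Real.dist_eq, sub_zero, abs_of_nonneg (Real.iSup_nonneg fun x => abs_nonneg _)]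
  have hk' : 1 / (m : ℝ) < ε / 2 := by simpa [m] using hk
  exact (Real.iSup_le hbound (by positivity)).trans_lt (by linarith)

theorem Ioo_subset_range_of_tendsto {F : ℝ → ℝ} (hF : Continuous F) {a b : ℝ}
    (ha : Tendsto F atBot (𝓝 a)) (hb : Tendsto F atTop (𝓝 b)) : Ioo a b ⊆ range F :=
  fun _ hc => mem_range_of_exists_le_of_exists_ge hF
    ((ha.eventually (gt_mem_nhds hc.1)).exists.imp fun _ => le_of_lt)
    ((hb.eventually (lt_mem_nhds hc.2)).exists.imp fun _ => le_of_lt)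

/-- Glivenko–Cantelli under dependence: if the p-values form a strongly stationary
sequence with common continuous CDF `F` and the empirical CDF converges pointwise in
probability to `F`, then `‖Fₙ - F‖_∞ → 0` almost surely. -/
theorem glivenko_cantelli_stationary
    {Ω : Type*} [MeasurableSpace Ω] (Pr : Measure Ω) [IsProbabilityMeasure Pr]
    (P : ℕ → Ω → ℝ) (hmeas : ∀ i, Measurable (P i))
    (F : ℝ → ℝ) (hFcont : Continuous F)
    (hcdf : ∀ i x, (Pr {ω | P i ω ≤ x}).toReal = F x)
    (hstat : Measure.map (fun ω => (fun i => P i ω : ℕ → ℝ)) Pr =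
      Measure.map (fun ω => (fun i => P (i + 1) ω : ℕ → ℝ)) Pr)
    (hconv : ∀ x : ℝ, TendstoInMeasure Pr (fun n ω => empCDF P n ω x) atTop
      (fun _ => F x)) :
    ∀ᵐ ω ∂Pr, Tendsto (fun n : ℕ => ⨆ x : ℝ, |empCDF P n ω x - F x|)
      atTop (nhds 0) := by
  have := Measure.isProbabilityMeasure_map (μ := Pr) (hmeas 0).aemeasurable
  have hF : F = cdf (Pr.map (P 0)) := funext fun x => by
    rw [cdf_eq_real, map_measureReal_apply (hmeas 0) measurableSet_Iic, ← hcdf 0 x]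
    rfl
  have hrange : Ioo 0 1 ⊆ range F :=
    Ioo_subset_range_of_tendsto hFcont (hF ▸ tendsto_cdf_atBot _) (hF ▸ tendsto_cdf_atTop _)
  have hae : ∀ᵐ ω ∂Pr, ∀ q : ℚ, Tendsto (fun n => empCDF P n ω (Function.invFun F q)) atTop
      (𝓝 (F (Function.invFun F q))) :=
    ae_all_iff.2 fun q => ae_tendsto_empCDF_of_tendstoInMeasure P hmeas hstat (hconv _)
  filter_upwards [hae] with ω hω
  exact tendsto_iSup_abs_sub_of_tendsto_quantiles (monotone_empCDF P · ω) (empCDF_nonneg P · ω)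
    (empCDF_le_one P · ω) (hF ▸ monotone_cdf _) (hF ▸ cdf_nonneg _) (hF ▸ cdf_le_one _)
    (fun q hq => ⟨_, mem_range_self q, Function.invFun_eq (hrange hq)⟩)
    (forall_mem_range.2 hω)
end

section
/- Let P₁, P₂, … be a strongly stationary sequence of random variables with common marginal CDF F and empirical CDF Fₙ(x) = (1/n)·#{ i ≤ n : Pᵢ ≤ x }. Then the condition: for every x, (1/n²)·Σ_{1 ≤ i ≠ j ≤ n} ( P(Pᵢ ≤ x, Pⱼ ≤ x) - F(x)² ) → 0 as n → ∞, is necessary and sufficient for: for every x, Fₙ(x) → F(x) in probability as n → ∞. -/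
/-!
Write `Xᵢ = 1{Pᵢ ≤ x}`. Then `Fₙ(x)` is the mean of `X₁, …, Xₙ`, so it has expectation `F(x)` and
variance `n⁻² Σᵢⱼ cov(Xᵢ, Xⱼ)`, where `cov(Xᵢ, Xⱼ) = P(Pᵢ ≤ x, Pⱼ ≤ x) - F(x)²` off the diagonal.
The `n` diagonal terms `F(x) - F(x)²` contribute only `O(1/n)`, so the hypothesis says exactly that
`Var Fₙ(x) → 0`. For random variables that are uniformly bounded and have constant mean `c`,
`Var → 0` is equivalent to convergence in probability to `c`: one direction is Chebyshev's inequality,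
the other dominated convergence along almost surely convergent subsequences.
-/

open Filter MeasureTheory Set ProbabilityTheory

open Topology

section

variable {Ω : Type*}

lemma Finset.sum_sum_ite_ne {ι M : Type*} [DecidableEq ι] [AddCommGroup M] (s : Finset ι)
    (a : ι → ι → M) :
    ∑ i ∈ s, ∑ j ∈ s, (if i ≠ j then a i j else 0) = ∑ i ∈ s, ∑ j ∈ s, a i j - ∑ i ∈ s, a i i := by
  rw [← Finset.sum_sub_distrib]
  refine Finset.sum_congr rfl fun i hi => ?_
  have hterm : ∀ j, (if i ≠ j then a i j else 0) = a i j - if i = j then a i j else 0 := by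
    intro j; by_cases h : i = j <;> simp [h]
  rw [Finset.sum_congr rfl fun j _ => hterm j, Finset.sum_sub_distrib, Finset.sum_ite_eq,
    if_pos hi]

lemma empCDF_eq_sum_indicator (P : ℕ → Ω → ℝ) (n : ℕ) (x : ℝ) :
    (fun ω => empCDF P n ω x) =
      fun ω => (∑ i ∈ Finset.range n, {ω | P i ω ≤ x}.indicator (1 : Ω → ℝ) ω) / n := by
  ext ω
  simp [empCDF, Set.indicator_apply]

lemma abs_empCDF_le_one (P : ℕ → Ω → ℝ) (n : ℕ) (ω : Ω) (x : ℝ) : |empCDF P n ω x| ≤ 1 := by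
  rw [abs_of_nonneg (by unfold empCDF; positivity), empCDF]
  exact div_le_one_of_le₀ (by exact_mod_cast (Finset.card_filter_le _ _).trans (by simp))
    n.cast_nonneg

variable [MeasurableSpace Ω] {μ : Measure Ω}

lemma covariance_indicator_one [IsProbabilityMeasure μ] {A B : Set Ω}
    (hA : MeasurableSet A) (hB : MeasurableSet B) :
    cov[A.indicator 1, B.indicator 1; μ] = μ.real (A ∩ B) - μ.real A * μ.real B := by
  have hA2 : MemLp (A.indicator (1 : Ω → ℝ)) 2 μ :=
    memLp_indicator_const 2 hA 1 (.inr (measure_ne_top _ _))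
  have hB2 : MemLp (B.indicator (1 : Ω → ℝ)) 2 μ :=
    memLp_indicator_const 2 hB 1 (.inr (measure_ne_top _ _))
  rw [covariance_eq_sub hA2 hB2, ← inter_indicator_one, integral_indicator_one (hA.inter hB),
    integral_indicator_one hA, integral_indicator_one hB]

section ConvergenceInMeasure

variable [IsFiniteMeasure μ] {Y : ℕ → Ω → ℝ} {c : ℝ}

lemma tendstoInMeasure_of_tendsto_variance (hY : ∀ n, MemLp (Y n) 2 μ)
    (hmean : ∀ᶠ n in atTop, μ[Y n] = c) (h : Tendsto (fun n => Var[Y n; μ]) atTop (𝓝 0)) :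
    TendstoInMeasure μ Y atTop (fun _ => c) := by
  rw [tendstoInMeasure_iff_dist]
  intro ε hε
  have hbound : Tendsto (fun n => ENNReal.ofReal (Var[Y n; μ] / ε ^ 2)) atTop (𝓝 0) := by
    simpa using ENNReal.tendsto_ofReal (h.div_const (ε ^ 2))
  refine tendsto_of_tendsto_of_tendsto_of_le_of_le' tendsto_const_nhds hbound
    (Eventually.of_forall fun _ => zero_le) ?_
  filter_upwards [hmean] with n hn
  simpa [Real.dist_eq, hn] using meas_ge_le_variance_div_sq (hY n) hε

lemma tendsto_integral_sq_sub_of_tendstoInMeasure {C : ℝ}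
    (hY : ∀ n, AEStronglyMeasurable (Y n) μ) (hbdd : ∀ n, ∀ᵐ ω ∂μ, |Y n ω| ≤ C)
    (h : TendstoInMeasure μ Y atTop (fun _ => c)) :
    Tendsto (fun n => ∫ ω, (Y n ω - c) ^ 2 ∂μ) atTop (𝓝 0) := by
  refine tendsto_of_subseq_tendsto fun ns hns => ?_
  obtain ⟨ms, -, hms⟩ := (h.comp hns).exists_seq_tendsto_ae
  refine ⟨ms, ?_⟩
  have hsq : ∀ k, ∀ᵐ ω ∂μ, ‖(Y (ns (ms k)) ω - c) ^ 2‖ ≤ (C + |c|) ^ 2 := fun k => by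
    filter_upwards [hbdd (ns (ms k))] with ω hω
    rw [Real.norm_eq_abs, abs_pow]
    exact pow_le_pow_left₀ (abs_nonneg _) ((abs_sub _ _).trans (by gcongr)) 2
  have hlim := tendsto_integral_of_dominated_convergence (fun _ => (C + |c|) ^ 2)
    (fun k => ((hY _).sub aestronglyMeasurable_const).pow 2) (integrable_const _) hsq
    (hms.mono fun ω hω => by simpa using (hω.sub_const c).pow 2)
  simpa using hlim

lemma tendsto_variance_iff_tendstoInMeasure {C : ℝ}
    (hY : ∀ n, AEStronglyMeasurable (Y n) μ) (hbdd : ∀ n, ∀ᵐ ω ∂μ, |Y n ω| ≤ C)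
    (hmean : ∀ᶠ n in atTop, μ[Y n] = c) :
    Tendsto (fun n => Var[Y n; μ]) atTop (𝓝 0) ↔ TendstoInMeasure μ Y atTop (fun _ => c) := by
  refine ⟨tendstoInMeasure_of_tendsto_variance
    (fun n => MemLp.of_bound (hY n) C (by simpa using hbdd n)) hmean, fun h => ?_⟩
  refine (tendsto_integral_sq_sub_of_tendstoInMeasure hY hbdd h).congr' ?_
  filter_upwards [hmean] with n hn
  rw [variance_eq_integral (hY n).aemeasurable, hn]

end ConvergenceInMeasure

section EmpiricalCDF

variable {P : ℕ → Ω → ℝ} (hP : ∀ i, Measurable (P i))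
include hP

lemma measurable_empCDF (n : ℕ) (x : ℝ) : Measurable fun ω => empCDF P n ω x := by
  rw [empCDF_eq_sum_indicator]
  exact (Finset.measurable_sum _ fun i _ =>
    measurable_const.indicator (measurableSet_le (hP i) measurable_const)).div_const _

lemma integral_empCDF [IsFiniteMeasure μ] {n : ℕ} {x c : ℝ}
    (hcdf : ∀ i, μ.real {ω | P i ω ≤ x} = c) (hn : n ≠ 0) : μ[fun ω => empCDF P n ω x] = c := by
  rw [empCDF_eq_sum_indicator, integral_div, integral_finsetSum _ fun i _ =>
    (integrable_const 1).indicator (measurableSet_le (hP i) measurable_const)]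
  simp_rw [integral_indicator_one (measurableSet_le (hP _) measurable_const), hcdf,
    Finset.sum_const, Finset.card_range, nsmul_eq_mul]
  field_simp

lemma variance_empCDF [IsFiniteMeasure μ] (n : ℕ) (x : ℝ) :
    Var[fun ω => empCDF P n ω x; μ] = (∑ i ∈ Finset.range n, ∑ j ∈ Finset.range n,
      cov[{ω | P i ω ≤ x}.indicator 1, {ω | P j ω ≤ x}.indicator 1; μ]) / n ^ 2 := by
  have hmem : ∀ i ∈ Finset.range n, MemLp ({ω | P i ω ≤ x}.indicator (1 : Ω → ℝ)) 2 μ :=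
    fun i _ => memLp_indicator_const 2 (measurableSet_le (hP i) measurable_const) 1
      (.inr (measure_ne_top _ _))
  simp_rw [empCDF_eq_sum_indicator, div_eq_mul_inv, variance_mul_const,
    variance_fun_sum' hmem]
  ring

lemma offDiag_sum_div_sq_eq_variance_empCDF_sub [IsProbabilityMeasure μ] {x c : ℝ}
    (hcdf : ∀ i, μ.real {ω | P i ω ≤ x} = c) (n : ℕ) :
    (1 / (n : ℝ) ^ 2) * ∑ i ∈ Finset.range n, ∑ j ∈ Finset.range n,
      (if i ≠ j then μ.real {ω | P i ω ≤ x ∧ P j ω ≤ x} - c ^ 2 else 0) =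
      Var[fun ω => empCDF P n ω x; μ] - (c - c ^ 2) / n := by
  have hcov : ∀ i j, cov[{ω | P i ω ≤ x}.indicator 1, {ω | P j ω ≤ x}.indicator 1; μ] =
      μ.real {ω | P i ω ≤ x ∧ P j ω ≤ x} - c ^ 2 := fun i j => by
    rw [covariance_indicator_one (measurableSet_le (hP i) measurable_const)
      (measurableSet_le (hP j) measurable_const), hcdf, hcdf, sq]
    rfl
  have hdiag : ∀ i, μ.real {ω | P i ω ≤ x ∧ P i ω ≤ x} = c := fun i => by simpa using hcdf i
  rw [Finset.sum_sum_ite_ne, variance_empCDF hP]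
  simp_rw [hcov, hdiag, Finset.sum_const, Finset.card_range, nsmul_eq_mul]
  rcases eq_or_ne n 0 with rfl | hn
  · simp
  · field_simp

end EmpiricalCDF

end

theorem empirical_cdf_convergence_iff_cov_general
    {Ω : Type*} [MeasurableSpace Ω] (Pr : Measure Ω) [IsProbabilityMeasure Pr]
    (P : ℕ → Ω → ℝ) (hmeas : ∀ i, Measurable (P i))
    (F : ℝ → ℝ)
    (hcdf : ∀ i x, (Pr {ω | P i ω ≤ x}).toReal = F x) :
    (∀ x : ℝ, Tendsto (fun n : ℕ => (1 / (n : ℝ) ^ 2) *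
        ∑ i ∈ Finset.range n, ∑ j ∈ Finset.range n,
          (if i ≠ j then (Pr {ω | P i ω ≤ x ∧ P j ω ≤ x}).toReal - F x ^ 2 else 0))
      atTop (nhds 0)) ↔
    (∀ x : ℝ, TendstoInMeasure Pr (fun n ω => empCDF P n ω x) atTop
      (fun _ => F x)) := by
  refine forall_congr' fun x => ?_
  have hcdf_x : ∀ i, Pr.real {ω | P i ω ≤ x} = F x := fun i => hcdf i x
  rw [← tendsto_variance_iff_tendstoInMeasure (C := 1)
    (fun n => (measurable_empCDF hmeas n x).aestronglyMeasurable)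
    (fun n => ae_of_all _ fun ω => abs_empCDF_le_one P n ω x)
    ((eventually_ne_atTop 0).mono fun n hn => integral_empCDF hmeas hcdf_x hn)]
  simp_rw [← measureReal_def, offDiag_sum_div_sq_eq_variance_empCDF_sub hmeas hcdf_x]
  have hsmall : Tendsto (fun n : ℕ => (F x - F x ^ 2) / n) atTop (𝓝 0) :=
    tendsto_const_div_atTop_nhds_zero_nat _
  exact ⟨fun h => by simpa using h.add hsmall, fun h => by simpa using h.sub hsmall⟩

/-- For a strongly stationary sequence with common marginal CDF `F`, the condition
`(1/n²)·Σ_{i≠j≤n} (P(Pᵢ≤x, Pⱼ≤x) - F(x)²) → 0` for every `x` is necessary and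
sufficient for `Fₙ(x) → F(x)` in probability for every `x`. -/
theorem empirical_cdf_convergence_iff_cov
    {Ω : Type*} [MeasurableSpace Ω] (Pr : Measure Ω) [IsProbabilityMeasure Pr]
    (P : ℕ → Ω → ℝ) (hmeas : ∀ i, Measurable (P i))
    (F : ℝ → ℝ)
    (hcdf : ∀ i x, (Pr {ω | P i ω ≤ x}).toReal = F x)
    (hstat : Measure.map (fun ω => (fun i => P i ω : ℕ → ℝ)) Pr =
      Measure.map (fun ω => (fun i => P (i + 1) ω : ℕ → ℝ)) Pr) :
    (∀ x : ℝ, Tendsto (fun n : ℕ => (1 / (n : ℝ) ^ 2) *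
        ∑ i ∈ Finset.range n, ∑ j ∈ Finset.range n,
          (if i ≠ j then (Pr {ω | P i ω ≤ x ∧ P j ω ≤ x}).toReal - F x ^ 2 else 0))
      atTop (nhds 0)) ↔
    (∀ x : ℝ, TendstoInMeasure Pr (fun n ω => empCDF P n ω x) atTop
      (fun _ => F x)) :=
  empirical_cdf_convergence_iff_cov_general Pr P hmeas F hcdf
end

section
/- Let F and F₀ be CDFs on ℝ. Then the set Γ = { γ ∈ (0,1] : (F - (1-γ)F₀)/γ is a CDF } is convex; i.e., if γ₁, γ₂ ∈ Γ and α ∈ [0,1], then αγ₁ + (1-α)γ₂ ∈ Γ. -/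
open Filter MeasureTheory Set

/-! Writing `F = (1 - γ) F₀ + γ G`, the component `G` is determined by `γ`, and for
`γ = a γ₁ + b γ₂` it is the convex combination of the components for `γ₁` and `γ₂` with weights
`a γ₁ / γ` and `b γ₂ / γ`. Since CDFs form a convex set, the claim follows. -/

theorem convex_setOf_isCDF : Convex ℝ {G : ℝ → ℝ | IsCDF G} := by
  rintro G₁ ⟨mono₁, cont₁, bot₁, top₁⟩ G₂ ⟨mono₂, cont₂, bot₂, top₂⟩ a b ha hb hab
  show IsCDF fun x => a • G₁ x + b • G₂ x
  refine ⟨(mono₁.const_smul ha).add (mono₂.const_smul hb),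
    fun x => ((cont₁ x).const_smul a).add ((cont₂ x).const_smul b), ?_, ?_⟩
  · simpa using (bot₁.const_smul a).add (bot₂.const_smul b)
  · simpa [hab] using (top₁.const_smul a).add (top₂.const_smul b)

noncomputable def mixtureComponent (F F₀ : ℝ → ℝ) (γ : ℝ) : ℝ → ℝ :=
  fun x => (F x - (1 - γ) * F₀ x) / γ

theorem mixtureComponent_convex_comb (F F₀ : ℝ → ℝ) {γ₁ γ₂ a b : ℝ}
    (hγ₁ : γ₁ ≠ 0) (hγ₂ : γ₂ ≠ 0) (hγ : a * γ₁ + b * γ₂ ≠ 0) (hab : a + b = 1) :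
    mixtureComponent F F₀ (a * γ₁ + b * γ₂) =
      (a * γ₁ / (a * γ₁ + b * γ₂)) • mixtureComponent F F₀ γ₁ +
        (b * γ₂ / (a * γ₁ + b * γ₂)) • mixtureComponent F F₀ γ₂ := by
  funext x
  simp only [mixtureComponent, Pi.add_apply, Pi.smul_apply, smul_eq_mul]
  obtain rfl : b = 1 - a := by linarith
  field_simp
  ring

theorem gamma_set_convex_general (F F₀ : ℝ → ℝ) :
    Convex ℝ {γ : ℝ | γ ∈ Set.Ioc (0 : ℝ) 1 ∧
      IsCDF (fun x => (F x - (1 - γ) * F₀ x) / γ)} := by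
  rintro γ₁ ⟨hγ₁, hG₁⟩ γ₂ ⟨hγ₂, hG₂⟩ a b ha hb hab
  have hγ := convex_Ioc (0 : ℝ) 1 hγ₁ hγ₂ ha hb hab
  simp only [smul_eq_mul] at hγ ⊢
  refine ⟨hγ, ?_⟩
  change IsCDF (mixtureComponent F F₀ (a * γ₁ + b * γ₂))
  rw [mixtureComponent_convex_comb F F₀ hγ₁.1.ne' hγ₂.1.ne' hγ.1.ne' hab]
  refine convex_setOf_isCDF hG₁ hG₂
    (div_nonneg (mul_nonneg ha hγ₁.1.le) hγ.1.le) (div_nonneg (mul_nonneg hb hγ₂.1.le) hγ.1.le) ?_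
  rw [← add_div, div_self hγ.1.ne']

/-- The set `Γ = { γ ∈ (0,1] : (F - (1-γ)F₀)/γ is a CDF }` is convex. -/
theorem gamma_set_convex (F F₀ : ℝ → ℝ) (hF : IsCDF F) (hF₀ : IsCDF F₀) :
    Convex ℝ {γ : ℝ | γ ∈ Set.Ioc (0 : ℝ) 1 ∧
      IsCDF (fun x => (F x - (1 - γ) * F₀ x) / γ)} :=
  gamma_set_convex_general F F₀
end

section
/- Let X₁,…,Xₙ be a sample with empirical CDF Fₙ, let F₀ be the null CDF and F the true CDF, and define π₁̲ = inf{ γ ∈ (0,1] : (F - (1-γ)F₀)/γ is a CDF }. For γ ∈ (0,1] set F̂₁,ₙ(γ) = (Fₙ - (1-γ)F₀)/γ, let F̂₂,ₙ(γ) be the CDF minimizing (1/n)Σᵢ (W(Xᵢ) - F̂₁,ₙ(γ)(Xᵢ))² over all CDFs W, and let dₙ(f,g)² = (1/n)Σᵢ (f(Xᵢ) - g(Xᵢ))². Then for every γ with π₁̲ ≤ γ ≤ 1, γ·dₙ(F̂₁,ₙ(γ), F̂₂,ₙ(γ)) ≤ dₙ(Fₙ, F). -/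
open Filter MeasureTheory Set

/-- Empirical CDF of a finite sample. -/
noncomputable def empCDFfin {n : ℕ} (X : Fin n → ℝ) (x : ℝ) : ℝ :=
  ((Finset.univ.filter (fun i => X i ≤ x)).card : ℝ) / (n : ℝ)

/-- The `L₂(Fₙ)` distance: `dₙ(f,g)² = (1/n)Σᵢ (f(Xᵢ) - g(Xᵢ))²`. -/
noncomputable def dn {n : ℕ} (X : Fin n → ℝ) (f g : ℝ → ℝ) : ℝ :=
  Real.sqrt ((1 / (n : ℝ)) * ∑ i, (f (X i) - g (X i)) ^ 2)

/-- The naive estimator `F̂₁,ₙ(γ) = (Fₙ - (1-γ)F₀)/γ`. -/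
noncomputable def Fhat1 {n : ℕ} (X : Fin n → ℝ) (F₀ : ℝ → ℝ) (γ : ℝ) : ℝ → ℝ :=
  fun x => (empCDFfin X x - (1 - γ) * F₀ x) / γ

lemma Fhat1_eq_mixtureComponent {n : ℕ} (X : Fin n → ℝ) (F₀ : ℝ → ℝ) (γ : ℝ) :
    Fhat1 X F₀ γ = mixtureComponent (empCDFfin X) F₀ γ :=
  rfl

section Distance

variable {n : ℕ} (X : Fin n → ℝ)

lemma dn_comm (f g : ℝ → ℝ) : dn X f g = dn X g f := by
  simp only [dn, ← neg_sub (f _), neg_sq]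

lemma dn_mixtureComponent (f g h : ℝ → ℝ) (γ : ℝ) :
    dn X (mixtureComponent f h γ) (mixtureComponent g h γ) = dn X f g / |γ| := by
  have hterm : ∀ i, (mixtureComponent f h γ (X i) - mixtureComponent g h γ (X i)) ^ 2
      = (f (X i) - g (X i)) ^ 2 / γ ^ 2 := fun i => by
    simp only [mixtureComponent, ← sub_div, div_pow]
    ring
  simp only [dn, hterm, ← Finset.sum_div, mul_div_assoc', Real.sqrt_div' _ (sq_nonneg γ),
    Real.sqrt_sq_eq_abs]

end Distance

section MixtureComponent

variable {F F₀ : ℝ → ℝ}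

lemma monotone_mixtureComponent_iff {γ : ℝ} (hγ : 0 < γ) :
    Monotone (mixtureComponent F F₀ γ) ↔ Monotone fun x => F x - (1 - γ) * F₀ x :=
  ⟨fun h _ _ hxy => (div_le_div_iff_of_pos_right hγ).1 (h hxy),
    fun h => h.div_const hγ.le⟩

lemma isCDF_mixtureComponent_of_monotone (hF : IsCDF F) (hF₀ : IsCDF F₀) {γ : ℝ} (hγ : γ ≠ 0)
    (hmono : Monotone (mixtureComponent F F₀ γ)) : IsCDF (mixtureComponent F F₀ γ) := by
  obtain ⟨-, hFcont, hFbot, hFtop⟩ := hF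
  obtain ⟨-, hF₀cont, hF₀bot, hF₀top⟩ := hF₀
  refine ⟨hmono, fun x => ((hFcont x).sub ((hF₀cont x).const_mul _)).div_const γ, ?_, ?_⟩
  · have h := (hFbot.sub (hF₀bot.const_mul (1 - γ))).div_const γ
    rwa [mul_zero, sub_zero, zero_div] at h
  · have h := (hFtop.sub (hF₀top.const_mul (1 - γ))).div_const γ
    rwa [mul_one, sub_sub_cancel, div_self hγ] at h

variable (F F₀)

lemma isClosed_setOf_monotone_sub_mul_s15 :
    IsClosed {γ : ℝ | Monotone fun x => F x - (1 - γ) * F₀ x} := by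
  simp only [Monotone, ofPred_forall]
  exact isClosed_iInter fun x => isClosed_iInter fun y => isClosed_iInter fun _ =>
    isClosed_le (by fun_prop) (by fun_prop)

lemma ordConnected_setOf_monotone_sub_mul :
    OrdConnected {γ : ℝ | Monotone fun x => F x - (1 - γ) * F₀ x} := by
  refine ⟨fun γ₁ h₁ γ₂ h₂ γ hγ x y hxy => ?_⟩
  have hx₁ := h₁ hxy
  have hx₂ := h₂ hxy
  simp only at hx₁ hx₂ ⊢
  -- the gap `F y - F x - (1 - γ) (F₀ y - F₀ x)` is affine in `γ`, so its minimum on `[γ₁, γ₂]` is at an endpoint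
  rcases le_total (F₀ x) (F₀ y) with h | h
  · nlinarith [mul_le_mul_of_nonneg_right hγ.1 (sub_nonneg.2 h)]
  · nlinarith [mul_le_mul_of_nonneg_right hγ.2 (sub_nonneg.2 h)]

lemma isCDF_mixtureComponent_of_sInf_le (hF : IsCDF F) (hF₀ : IsCDF F₀) {γ : ℝ}
    (hγ : sInf {γ' | γ' ∈ Ioc (0 : ℝ) 1 ∧ IsCDF (mixtureComponent F F₀ γ')} ≤ γ)
    (hγ₀ : 0 < γ) (hγ₁ : γ ≤ 1) : IsCDF (mixtureComponent F F₀ γ) := by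
  set S := {γ' | γ' ∈ Ioc (0 : ℝ) 1 ∧ IsCDF (mixtureComponent F F₀ γ')}
  set M := {γ : ℝ | Monotone fun x => F x - (1 - γ) * F₀ x}
  have hS_sub : S ⊆ M := fun γ' hγ' => (monotone_mixtureComponent_iff hγ'.1.1).1 hγ'.2.1
  have hone : (1 : ℝ) ∈ S := ⟨right_mem_Ioc.2 one_pos, by
    convert hF using 1
    funext x
    simp [mixtureComponent]⟩
  have hinf : sInf S ∈ M :=
    closure_minimal hS_sub (isClosed_setOf_monotone_sub_mul_s15 F F₀)
      (csInf_mem_closure ⟨1, hone⟩ ⟨0, fun _ h => h.1.1.le⟩)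
  have hγM : γ ∈ M :=
    (ordConnected_setOf_monotone_sub_mul F F₀).out hinf (hS_sub hone) ⟨hγ, hγ₁⟩
  exact isCDF_mixtureComponent_of_monotone hF hF₀ hγ₀.ne'
    ((monotone_mixtureComponent_iff hγ₀).2 hγM)

end MixtureComponent

/-- Patra–Sen inequality: for every `γ` with `π₁̲ ≤ γ ≤ 1`,
`γ·dₙ(F̂₁,ₙ(γ), F̂₂,ₙ(γ)) ≤ dₙ(Fₙ, F)`, where `F̂₂,ₙ(γ)` is the CDF minimizing the
`dₙ`-distance to `F̂₁,ₙ(γ)`. -/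
theorem patra_sen_distance_bound
    (n : ℕ) (X : Fin n → ℝ) (F₀ F : ℝ → ℝ) (hF₀ : IsCDF F₀) (hF : IsCDF F)
    (Fhat2 : ℝ → ℝ → ℝ)
    (hFhat2 : ∀ γ : ℝ, IsCDF (Fhat2 γ) ∧
      ∀ W : ℝ → ℝ, IsCDF W → dn X (Fhat2 γ) (Fhat1 X F₀ γ) ≤ dn X W (Fhat1 X F₀ γ)) :
    ∀ γ : ℝ,
      sInf {γ' : ℝ | γ' ∈ Set.Ioc (0 : ℝ) 1 ∧
        IsCDF (fun x => (F x - (1 - γ') * F₀ x) / γ')} ≤ γ → γ ≤ 1 →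
      γ * dn X (Fhat1 X F₀ γ) (Fhat2 γ) ≤ dn X (empCDFfin X) F := by
  intro γ hγ hγ₁
  have hγ₀ : 0 ≤ γ := (Real.sInf_nonneg fun _ h => h.1.1.le).trans hγ
  rcases hγ₀.eq_or_lt with rfl | hγpos
  · rw [zero_mul]
    exact Real.sqrt_nonneg _
  have hcdf := isCDF_mixtureComponent_of_sInf_le F F₀ hF hF₀ hγ hγpos hγ₁
  calc γ * dn X (Fhat1 X F₀ γ) (Fhat2 γ)
      = γ * dn X (Fhat2 γ) (Fhat1 X F₀ γ) := by rw [dn_comm]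
    _ ≤ γ * dn X (mixtureComponent F F₀ γ) (Fhat1 X F₀ γ) := by
      gcongr
      exact (hFhat2 γ).2 _ hcdf
    _ = dn X (empCDFfin X) F := by
      rw [Fhat1_eq_mixtureComponent, dn_mixtureComponent, abs_of_pos hγpos, dn_comm,
        mul_div_cancel₀ _ hγpos.ne']
end
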